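/- arXiv:2506.01826 — 3 statements merged into one kernel-verified Lean document; each statement's English description precedes it below -/
import Mathlib

section
/- For a signed graph given by a symmetric matrix W ∈ ℝ^{N×N} (for i ≠ j, the pair (i,j) is an edge if and only if W_{i,j} ≠ 0), the following are equivalent: (i) the graph is balanced, i.e., every cycle (a closed walk through at least three pairwise-distinct vertices whose consecutive vertex pairs are edges) contains an even number of edges with negative weight; (ii) there exists a polarity assignment β : {1,…,N} → {1,−1} such that for every edge (i,j), β_i β_j W_{i,j} > 0 (equivalently, sign(W_{i,j}) = β_i β_j). -/
open SimpleGraph Walk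

section WProd

variable {V : Type*} {G : SimpleGraph V} (σ : V → V → ℝ)

/-- Product of edge signs along a walk. -/
def wprod : ∀ {u v : V}, G.Walk u v → ℝ
  | _, _, .nil => 1
  | _, _, .cons (u := a) (v := b) _ p => σ a b * wprod p

@[simp] lemma wprod_nil {u : V} : wprod σ (.nil : G.Walk u u) = 1 := rfl

@[simp] lemma wprod_cons {u v w : V} (h : G.Adj u v) (p : G.Walk v w) :
    wprod σ (.cons h p) = σ u v * wprod σ p := rfl

@[simp] lemma wprod_copy {u v u' v' : V} (p : G.Walk u v) (hu : u = u') (hv : v = v') :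
    wprod σ (p.copy hu hv) = wprod σ p := by subst hu; subst hv; rfl

lemma wprod_unit (hσ : ∀ a b, σ a b = 1 ∨ σ a b = -1) {u v : V} (p : G.Walk u v) :
    wprod σ p = 1 ∨ wprod σ p = -1 := by
  induction p with
  | nil => left; rfl
  | cons h p ih =>
    rw [wprod_cons]
    rcases hσ _ _ with h1 | h1 <;> rcases ih with h2 | h2 <;> rw [h1, h2] <;> norm_num

@[simp] lemma wprod_append {u v w : V} (p : G.Walk u v) (q : G.Walk v w) :
    wprod σ (p.append q) = wprod σ p * wprod σ q := by
  induction p with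
  | nil => simp
  | cons h p ih => simp [ih, mul_assoc]

lemma wprod_reverse (hσs : ∀ a b, σ a b = σ b a) {u v : V} (p : G.Walk u v) :
    wprod σ p.reverse = wprod σ p := by
  induction p with
  | nil => rfl
  | cons h p ih =>
    rw [Walk.reverse_cons, wprod_append, ih, wprod_cons, wprod_nil, wprod_cons, hσs]
    ring

lemma wprod_eq_prod {u v : V} (p : G.Walk u v) :
    wprod σ p = ∏ k ∈ Finset.range p.length, σ (p.getVert k) (p.getVert (k + 1)) := by
  induction p with
  | nil => simp
  | cons h p ih =>
    rw [wprod_cons, ih]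
    rw [show (Walk.cons h p).length = p.length + 1 from rfl, Finset.prod_range_succ']
    simp [Walk.getVert_cons_succ, Walk.getVert_zero, Walk.getVert_cons, mul_comm]

/-- take the first `n` steps of a walk -/
def wtake : ∀ {u v : V} (p : G.Walk u v) (n : ℕ), G.Walk u (p.getVert n)
  | _, _, p, 0 => (Walk.nil).copy rfl (p.getVert_zero).symm
  | _, _, .nil, _ + 1 => .nil
  | _, _, .cons h q, n + 1 => .cons h (wtake q n)

/-- drop the first `n` steps of a walk -/
def wdrop : ∀ {u v : V} (p : G.Walk u v) (n : ℕ), G.Walk (p.getVert n) v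
  | _, _, p, 0 => p.copy (p.getVert_zero).symm rfl
  | _, _, .nil, _ + 1 => .nil
  | _, _, .cons _ q, n + 1 => wdrop q n

@[simp] lemma length_wdrop : ∀ {u v : V} (p : G.Walk u v) (n : ℕ),
    (wdrop p n).length = p.length - n
  | _, _, p, 0 => by simp [wdrop]
  | _, _, .nil, n + 1 => by simp [wdrop]
  | _, _, .cons h q, n + 1 => by
      simpa [wdrop] using length_wdrop q n

@[simp] lemma length_wtake : ∀ {u v : V} (p : G.Walk u v) (n : ℕ),
    (wtake p n).length = min n p.length
  | _, _, p, 0 => by simp [wtake]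
  | _, _, .nil, n + 1 => by simp [wtake]
  | _, _, .cons h q, n + 1 => by
      simp [wtake, length_wtake q n, Nat.succ_min_succ]

lemma getVert_wdrop : ∀ {u v : V} (p : G.Walk u v) (n k : ℕ),
    (wdrop p n).getVert k = p.getVert (n + k)
  | _, _, p, 0, k => by simp [wdrop]
  | _, _, .nil, n + 1, k => by simp [wdrop, Walk.getVert_of_length_le]
  | _, _, .cons h q, n + 1, k => by
      simpa [wdrop, Walk.getVert_cons_succ, Nat.succ_add] using getVert_wdrop q n k

lemma wprod_wtake_wdrop : ∀ {u v : V} (p : G.Walk u v) (n : ℕ),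
    wprod σ p = wprod σ (wtake p n) * wprod σ (wdrop p n)
  | _, _, p, 0 => by simp [wtake, wdrop]
  | _, _, .nil, n + 1 => by simp [wtake, wdrop]
  | _, _, .cons h q, n + 1 => by
      simp [wtake, wdrop, wprod_wtake_wdrop q n, mul_assoc]

end WProd

section Loop

variable {V : Type*} {G : SimpleGraph V} (σ : V → V → ℝ)

lemma wprod_loop (hσ1 : ∀ a b, σ a b = 1 ∨ σ a b = -1) (hσs : ∀ a b, σ a b = σ b a)
    (H : ∀ (m : ℕ) (hm : 3 ≤ m) (c : Fin m → V), Function.Injective c →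
      (∀ k : Fin m, G.Adj (c k) (c ⟨(k.val + 1) % m, Nat.mod_lt _ (lt_of_lt_of_le (by norm_num) hm)⟩)) →
      ∏ k : Fin m, σ (c k) (c ⟨(k.val + 1) % m, Nat.mod_lt _ (lt_of_lt_of_le (by norm_num) hm)⟩) = 1) :
    ∀ {u : V} (w : G.Walk u u), wprod σ w = 1 := by
  suffices h : ∀ (n : ℕ) (u : V) (w : G.Walk u u), w.length = n → wprod σ w = 1 by
    intro u w; exact h w.length u w rfl
  intro n
  induction n using Nat.strong_induction_on with
  | _ n IH =>
  intro u w hw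
  match n, hw with
  | 0, hw =>
    have : w = .nil := Walk.nil_iff_eq_nil.mp (Walk.length_eq_zero_iff.mp hw)
    simp [this]
  | 1, hw =>
    exfalso
    have h01 := w.adj_getVert_succ (i := 0) (by omega)
    rw [Walk.getVert_zero, show (0+1 : ℕ) = w.length by omega, Walk.getVert_length] at h01
    exact G.irrefl h01
  | 2, hw =>
    rw [wprod_eq_prod, hw]
    have hg0 : w.getVert 0 = u := w.getVert_zero
    have hg2 : w.getVert 2 = u := by rw [show (2:ℕ) = w.length by omega]; exact w.getVert_length
    rw [show (2:ℕ) = 1 + 1 from rfl, Finset.prod_range_succ, Finset.prod_range_succ,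
      Finset.prod_range_zero, one_mul, hg0, show (1+1 : ℕ) = 2 from rfl, hg2,
      hσs (w.getVert 1) u]
    rcases hσ1 u (w.getVert 1) with h1 | h1 <;> rw [h1] <;> norm_num
  | (m + 3), hw =>
    by_cases hinj : Function.Injective (fun k : Fin (m + 3) => w.getVert k)
    · -- it's a genuine cycle: apply H
      set c : Fin (m + 3) → V := fun k => w.getVert k with hc
      have hlastv : w.getVert (m + 3) = w.getVert 0 := by
        rw [show m + 3 = w.length by omega, Walk.getVert_length, Walk.getVert_zero]
      have hadj : ∀ k : Fin (m + 3),
          G.Adj (c k) (c ⟨(k.val + 1) % (m + 3), Nat.mod_lt _ (by omega)⟩) := by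
        intro k
        by_cases hk : k.val + 1 < m + 3
        · have h1 : (k.val + 1) % (m + 3) = k.val + 1 := Nat.mod_eq_of_lt hk
          simp only [hc, h1]
          exact w.adj_getVert_succ (by omega)
        · have hk' : k.val = m + 2 := by omega
          have h1 : (k.val + 1) % (m + 3) = 0 := by
            rw [hk']; exact Nat.mod_self _
          simp only [hc]
          rw [h1, hk']
          have h2 := w.adj_getVert_succ (i := m + 2) (by omega)
          rwa [show m + 2 + 1 = m + 3 from rfl, hlastv] at h2
      have key := H (m + 3) (by omega) c hinj hadj
      rw [wprod_eq_prod, hw,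
        ← Fin.prod_univ_eq_prod_range (fun k => σ (w.getVert k) (w.getVert (k + 1))) (m + 3),
        ← key]
      apply Finset.prod_congr rfl
      intro k _
      by_cases hk : k.val + 1 < m + 3
      · have h1 : (k.val + 1) % (m + 3) = k.val + 1 := Nat.mod_eq_of_lt hk
        simp only [hc, h1]
      · have hk' : k.val = m + 2 := by omega
        have h1 : (k.val + 1) % (m + 3) = 0 := by
          rw [hk']; exact Nat.mod_self _
        simp only [hc]
        rw [h1, hk', show m + 2 + 1 = m + 3 from rfl, hlastv]
    · -- a repeated vertex: split the walk into two shorter closed walks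
      rw [Function.not_injective_iff] at hinj
      obtain ⟨i, j, hij, hne⟩ := hinj
      obtain ⟨a, b, hab, hbm, hcab⟩ :
          ∃ a b : ℕ, a < b ∧ b < m + 3 ∧ w.getVert a = w.getVert b := by
        rcases Nat.lt_or_ge i.val j.val with h | h
        · exact ⟨i, j, h, j.isLt, hij⟩
        · have h' : j.val < i.val := by
            rcases Nat.lt_or_ge j.val i.val with h2 | h2
            · exact h2
            · exact absurd (Fin.ext (by omega)) hne
          exact ⟨j, i, h', i.isLt, hij.symm⟩
      have hBv : (wdrop w a).getVert (b - a) = w.getVert a := by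
        rw [getVert_wdrop, show a + (b - a) = b by omega, hcab]
      have hB1 : wprod σ (wtake (wdrop w a) (b - a)) = 1 := by
        have := IH (b - a) (by omega) _ ((wtake (wdrop w a) (b - a)).copy rfl hBv)
          (by simp [hw]; omega)
        simpa using this
      have hw'1 : wprod σ (wtake w a) * wprod σ (wdrop (wdrop w a) (b - a)) = 1 := by
        have := IH (a + (m + 3) - b) (by omega) u
          ((wtake w a).append ((wdrop (wdrop w a) (b - a)).copy hBv rfl))
          (by simp [hw]; omega)
        simpa using this
      rw [wprod_wtake_wdrop (p := w) (n := a),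
        wprod_wtake_wdrop (p := wdrop w a) (n := b - a), hB1, one_mul, hw'1]

end Loop

lemma prod_ite_neg {α : Type*} (s : Finset α) (P : α → Prop) [DecidablePred P] :
    ∏ k ∈ s, (if P k then (-1 : ℝ) else 1) = (-1) ^ (s.filter P).card := by
  rw [Finset.prod_ite, Finset.prod_const, Finset.prod_const, one_pow, mul_one]

/-- Cartwright–Harary Theorem: a signed graph given by a symmetric matrix `W`
(with edge `(i,j)` iff `i ≠ j` and `W i j ≠ 0`) is balanced -- every cycle
(closed walk on `m ≥ 3` pairwise-distinct vertices whose consecutive pairs are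
edges) has an even number of negative edges -- if and only if there is a
polarity assignment `β : Fin N → {1,-1}` with `β i * β j * W i j > 0` on every
edge. -/
theorem cartwright_harary (N : ℕ) (W : Matrix (Fin N) (Fin N) ℝ)
    (hsym : W.IsSymm) :
    (∀ (m : ℕ) (hm : 3 ≤ m) (c : Fin m → Fin N),
      Function.Injective c →
      (∀ k : Fin m,
        c k ≠ c ⟨(k.val + 1) % m, Nat.mod_lt _ (by omega)⟩ ∧
        W (c k) (c ⟨(k.val + 1) % m, Nat.mod_lt _ (by omega)⟩) ≠ 0) →
      Even ((Finset.univ.filter (fun k : Fin m =>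
        W (c k) (c ⟨(k.val + 1) % m, Nat.mod_lt _ (by omega)⟩) < 0)).card))
    ↔ (∃ β : Fin N → ℝ, (∀ i, β i = 1 ∨ β i = -1) ∧
        ∀ i j : Fin N, i ≠ j → W i j ≠ 0 → 0 < β i * β j * W i j) := by
  set σ : Fin N → Fin N → ℝ := fun i j => if W i j < 0 then -1 else 1 with hσdef
  have hσ1 : ∀ a b, σ a b = 1 ∨ σ a b = -1 := by
    intro a b; by_cases h : W a b < 0 <;> simp [hσdef, h]
  have hσs : ∀ a b, σ a b = σ b a := by
    intro a b; simp [hσdef, hsym.apply]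
  constructor
  · -- balance → polarity
    intro hbal
    set G : SimpleGraph (Fin N) := SimpleGraph.fromRel (fun i j => W i j ≠ 0) with hGdef
    have hAdjW : ∀ {i j : Fin N}, G.Adj i j → i ≠ j ∧ W i j ≠ 0 := by
      intro i j hadj
      rw [hGdef, SimpleGraph.fromRel_adj] at hadj
      refine ⟨hadj.1, ?_⟩
      rcases hadj.2 with h | h
      · exact h
      · rw [← hsym.apply]; exact h
    have hloop : ∀ {u : Fin N} (w : G.Walk u u), wprod σ w = 1 := by
      refine wprod_loop σ hσ1 hσs ?_
      intro m hm c hinj hadj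
      have hprem : ∀ k : Fin m,
          c k ≠ c ⟨(k.val + 1) % m, Nat.mod_lt _ (by omega)⟩ ∧
          W (c k) (c ⟨(k.val + 1) % m, Nat.mod_lt _ (by omega)⟩) ≠ 0 :=
        fun k => hAdjW (hadj k)
      have heven := hbal m hm c hinj hprem
      rw [show (fun k : Fin m => σ (c k) (c ⟨(k.val + 1) % m, Nat.mod_lt _ (by omega)⟩))
          = fun k : Fin m => if W (c k) (c ⟨(k.val + 1) % m, Nat.mod_lt _ (by omega)⟩) < 0
            then (-1 : ℝ) else 1 from rfl]
      rw [prod_ite_neg]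
      exact Even.neg_one_pow heven
    -- build β from signs of walks back to a component representative
    have hreach : ∀ i : Fin N, G.Reachable ((G.connectedComponentMk i).out) i := by
      intro i
      exact SimpleGraph.ConnectedComponent.exact (Quot.out_eq _)
    set β : Fin N → ℝ := fun i => wprod σ (hreach i).some with hβdef
    refine ⟨β, fun i => wprod_unit σ hσ1 _, ?_⟩
    intro i j hne hW
    have hadj : G.Adj i j := by
      rw [hGdef, SimpleGraph.fromRel_adj]
      exact ⟨hne, Or.inl hW⟩
    have hroot : (G.connectedComponentMk i).out = (G.connectedComponentMk j).out := by
      exact congrArg Quot.out (SimpleGraph.ConnectedComponent.sound hadj.reachable)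
    have hkey : β i * σ i j * β j = 1 := by
      have h1 := hloop ((((hreach i).some.append (Walk.cons hadj Walk.nil)).append
        (((hreach j).some.copy hroot.symm rfl)).reverse))
      rw [wprod_append, wprod_append, wprod_cons, wprod_nil,
        wprod_reverse σ hσs, wprod_copy] at h1
      calc β i * σ i j * β j
          = wprod σ (hreach i).some * (σ i j * 1) * wprod σ (hreach j).some := by
            simp only [hβdef]; ring
        _ = 1 := h1
    have hβi : β i = 1 ∨ β i = -1 := wprod_unit σ hσ1 _
    have hβj : β j = 1 ∨ β j = -1 := wprod_unit σ hσ1 _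
    by_cases hWn : W i j < 0
    · have hσv : σ i j = -1 := by simp [hσdef, hWn]
      rw [hσv] at hkey
      have : β i * β j = -1 := by nlinarith
      rw [this]; nlinarith
    · have hWp : 0 < W i j := lt_of_le_of_ne (not_lt.mp hWn) (Ne.symm hW)
      have hσv : σ i j = 1 := by simp [hσdef, hWn]
      rw [hσv] at hkey
      have : β i * β j = 1 := by nlinarith
      rw [this]; nlinarith
  · -- polarity → balance
    rintro ⟨β, hβ, hpos⟩ m hm c hinj hc
    obtain ⟨n, rfl⟩ : ∃ n, m = n + 3 := ⟨m - 3, by omega⟩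
    have hfac : ∀ k : Fin (n + 3),
        (if W (c k) (c ⟨(k.val + 1) % (n + 3), Nat.mod_lt _ (by omega)⟩) < 0
          then (-1 : ℝ) else 1)
        = β (c k) * β (c ⟨(k.val + 1) % (n + 3), Nat.mod_lt _ (by omega)⟩) := by
      intro k
      obtain ⟨hne, hW⟩ := hc k
      have hp := hpos _ _ hne hW
      set k' : Fin (n + 3) := ⟨(k.val + 1) % (n + 3), Nat.mod_lt _ (by omega)⟩
      rcases hβ (c k) with h1 | h1 <;> rcases hβ (c k') with h2 | h2 <;>
        rw [h1, h2] at hp ⊢ <;>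
        [skip; skip; skip; skip] <;>
        · by_cases hWn : W (c k) (c k') < 0 <;> simp [hWn] <;> nlinarith
    have hmod : ∀ k : Fin (n + 3),
        (⟨(k.val + 1) % (n + 3), Nat.mod_lt _ (by omega)⟩ : Fin (n + 3)) = k + 1 := by
      intro k
      ext
      simp [Fin.add_def]
    have hprodeq : ((-1 : ℝ)) ^ ((Finset.univ.filter (fun k : Fin (n + 3) =>
        W (c k) (c ⟨(k.val + 1) % (n + 3), Nat.mod_lt _ (by omega)⟩) < 0)).card) = 1 := by
      rw [← prod_ite_neg]
      calc ∏ k : Fin (n + 3), (if W (c k) (c ⟨(k.val + 1) % (n + 3),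
              Nat.mod_lt _ (by omega)⟩) < 0 then (-1 : ℝ) else 1)
          = ∏ k : Fin (n + 3), β (c k) * β (c (k + 1)) := by
            refine Finset.prod_congr rfl fun k _ => ?_
            rw [hfac k, hmod k]
        _ = (∏ k : Fin (n + 3), β (c k)) * ∏ k : Fin (n + 3), β (c (k + 1)) := by
            rw [Finset.prod_mul_distrib]
        _ = (∏ k : Fin (n + 3), β (c k)) * ∏ k : Fin (n + 3), β (c k) := by
            congr 1
            exact Fintype.prod_equiv (Equiv.addRight 1) _ _ (fun k => rfl)
        _ = ∏ k : Fin (n + 3), (β (c k) * β (c k)) := by rw [Finset.prod_mul_distrib]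
        _ = 1 := by
            rw [Finset.prod_eq_one]
            intro k _
            rcases hβ (c k) with h | h <;> rw [h] <;> norm_num
    exact (neg_one_pow_eq_one_iff_even (by norm_num : (-1 : ℝ) ≠ 1)).mp hprodeq
end

section
/- Let W ∈ ℝ^{N×N} be symmetric with W_{i,i} ≥ 0 for all i, let β : {1,…,N} → {1,−1} satisfy β_i β_j W_{i,j} ≥ 0 for all i ≠ j, and let T = diag(β). Then for every λ ∈ ℝ and u ∈ ℝ^N, u is an eigenvector of L^b = D − W + diag(W) with eigenvalue λ if and only if Tu is an eigenvector of L⁺ = D − |W| + diag(W) with eigenvalue λ; the map u ↦ Tu is a linear bijection (its own inverse) between the λ-eigenspaces of L^b and L⁺. -/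
open Matrix

/-- For a balanced signed graph with polarities `β`, `T = diag(β)`: for every
`λ ∈ ℝ` and `u ∈ ℝ^N`, `u` is an eigenvector of `L^b = D - W + diag(W)` with
eigenvalue `λ` iff `T u` is an eigenvector of `L⁺ = D - |W| + diag(W)` with
eigenvalue `λ`; moreover `u ↦ T u` is its own inverse (hence a linear bijection
between the `λ`-eigenspaces). -/
theorem balanced_eigenvector_mapping (N : ℕ)
    (W : Matrix (Fin N) (Fin N) ℝ) (hsym : W.IsSymm)
    (hdiag : ∀ i, 0 ≤ W i i)
    (β : Fin N → ℝ) (hβ : ∀ i, β i = 1 ∨ β i = -1)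
    (hbal : ∀ i j : Fin N, i ≠ j → 0 ≤ β i * β j * W i j)
    (T Lb Lp : Matrix (Fin N) (Fin N) ℝ)
    (hT : T = Matrix.diagonal β)
    (hLb : Lb = Matrix.diagonal (fun k => ∑ l, W k l) - W
            + Matrix.diagonal (fun k => W k k))
    (hLp : Lp = Matrix.diagonal (fun k => ∑ l, W k l)
            - Matrix.of (fun k l => |W k l|)
            + Matrix.diagonal (fun k => W k k)) :
    (∀ (lam : ℝ) (u : Fin N → ℝ),
      (Lb.mulVec u = lam • u ∧ u ≠ 0) ↔
        (Lp.mulVec (T.mulVec u) = lam • (T.mulVec u) ∧ T.mulVec u ≠ 0)) ∧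
    (∀ u : Fin N → ℝ, T.mulVec (T.mulVec u) = u) := by
  -- β squares to 1
  have hβ2 : ∀ i, β i * β i = 1 := by
    intro i; rcases hβ i with h | h <;> rw [h] <;> norm_num
  -- T is an involution on vectors
  have hTT : ∀ u : Fin N → ℝ, T.mulVec (T.mulVec u) = u := by
    intro u
    rw [hT, mulVec_mulVec, diagonal_mul_diagonal]
    have : (fun i => β i * β i) = (1 : Fin N → ℝ) := by
      funext i; exact hβ2 i
    rw [this, show Matrix.diagonal (1 : Fin N → ℝ) = 1 from diagonal_one, one_mulVec]
  -- key intertwining identity: Lp * T = T * Lb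
  have hkey : Lp * T = T * Lb := by
    ext i j
    rw [hT, mul_diagonal, diagonal_mul, hLp, hLb]
    by_cases hij : i = j
    · subst hij
      simp only [Matrix.add_apply, Matrix.sub_apply, diagonal_apply_eq, of_apply,
        abs_of_nonneg (hdiag i)]
      ring
    · have habs : |W i j| = β i * β j * W i j := by
        have h1 : |β i * β j| = 1 := by
          rcases hβ i with h | h <;> rcases hβ j with h' | h' <;>
            rw [h, h'] <;> norm_num
        calc |W i j| = |β i * β j| * |W i j| := by rw [h1, one_mul]
          _ = |β i * β j * W i j| := (abs_mul _ _).symm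
          _ = β i * β j * W i j := abs_of_nonneg (hbal i j hij)
      simp only [Matrix.add_apply, Matrix.sub_apply, diagonal_apply_ne _ hij, of_apply]
      have hkey2 : β j * |W i j| = β i * W i j := by
        calc β j * |W i j| = β i * (β j * β j) * W i j := by rw [habs]; ring
          _ = β i * W i j := by rw [hβ2 j]; ring
      linear_combination -hkey2
  have hswap : ∀ u : Fin N → ℝ, Lp.mulVec (T.mulVec u) = T.mulVec (Lb.mulVec u) := by
    intro u
    rw [mulVec_mulVec, mulVec_mulVec, hkey]
  refine ⟨fun lam u => ?_, hTT⟩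
  constructor
  · rintro ⟨heig, hne⟩
    refine ⟨?_, ?_⟩
    · rw [hswap, heig, mulVec_smul]
    · intro h
      apply hne
      have := congrArg T.mulVec h
      rw [hTT] at this
      simpa [mulVec_zero] using this
  · rintro ⟨heig, hne⟩
    refine ⟨?_, ?_⟩
    · have := congrArg T.mulVec heig
      rw [hswap, hTT, mulVec_smul, hTT] at this
      exact this
    · intro h
      apply hne
      rw [h, mulVec_zero]
end

section
/- Let W ∈ ℝ^{N×N} be symmetric such that W_{i,i} ≥ 2 Σ_{j≠i} max(−W_{i,j}, 0) for every i, and suppose there exist polarities β : {1,…,N} → {1,−1} with β_i β_j W_{i,j} ≥ 0 for all i ≠ j. Then the balanced signed graph Laplacian L^b = D − W + diag(W) is positive semi-definite. -/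
/-!
The off-diagonal entries of `L^b` are `-W i j` and its diagonal entries are the row sums
`∑ l, W i l`. Since `|a| = a + 2 max(-a, 0)`, the hypothesis on `W i i` says exactly that every row
of `L^b` is diagonally dominant, so by Gershgorin's circle theorem every eigenvalue of the
symmetric matrix `L^b` is nonnegative.
-/

open scoped ComplexOrder

namespace Matrix

section Gershgorin

variable {𝕜 n : Type*} [RCLike 𝕜] [Fintype n] [DecidableEq n]

theorem IsHermitian.hasEigenvalue_eigenvalues {A : Matrix n n 𝕜} (hA : A.IsHermitian) (i : n) :
    Module.End.HasEigenvalue (toLin' A) (hA.eigenvalues i : 𝕜) := by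
  rw [Module.End.hasEigenvalue_iff_mem_spectrum, spectrum_toLin', spectrum.algebraMap_mem_iff]
  exact hA.eigenvalues_mem_spectrum_real i

theorem IsHermitian.posSemidef_of_sum_norm_le_re_diag {A : Matrix n n 𝕜} (hA : A.IsHermitian)
    (hdom : ∀ i, ∑ j ∈ Finset.univ.erase i, ‖A i j‖ ≤ RCLike.re (A i i)) : A.PosSemidef := by
  refine hA.posSemidef_iff_eigenvalues_nonneg.mpr fun i => ?_
  obtain ⟨k, hk⟩ := eigenvalue_mem_ball (hA.hasEigenvalue_eigenvalues i)
  rw [Metric.mem_closedBall, dist_comm, dist_eq_norm] at hk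
  have hre : RCLike.re (A k k) - hA.eigenvalues i ≤ ‖A k k - hA.eigenvalues i‖ := by
    simpa using RCLike.re_le_norm (A k k - hA.eigenvalues i)
  simp only [Pi.zero_apply]
  linarith [hdom k]

end Gershgorin

section Laplacian

variable {R n : Type*} [Fintype n] [DecidableEq n]

def generalizedLaplacian [Ring R] (W : Matrix n n R) : Matrix n n R :=
  diagonal (fun k => ∑ l, W k l) - W + diagonal (fun k => W k k)

theorem generalizedLaplacian_apply_self [Ring R] (W : Matrix n n R) (i : n) :
    generalizedLaplacian W i i = ∑ l, W i l := by
  simp [generalizedLaplacian]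

theorem generalizedLaplacian_apply_of_ne [Ring R] (W : Matrix n n R) {i j : n} (hij : i ≠ j) :
    generalizedLaplacian W i j = -W i j := by
  simp [generalizedLaplacian, hij]

theorem IsSymm.generalizedLaplacian [Ring R] {W : Matrix n n R} (hW : W.IsSymm) :
    (generalizedLaplacian W).IsSymm := by
  simp only [Matrix.generalizedLaplacian, IsSymm, transpose_add, transpose_sub,
    diagonal_transpose, hW.eq]

theorem sum_abs_erase_le_sum_of_two_mul_sum_max_neg_le {W : Matrix n n ℝ} {i : n}
    (hdom : 2 * ∑ j ∈ Finset.univ.erase i, max (-W i j) 0 ≤ W i i) :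
    ∑ j ∈ Finset.univ.erase i, |W i j| ≤ ∑ l, W i l := by
  have habs : ∀ a : ℝ, |a| = a + 2 * max (-a) 0 := fun a => by
    rcases le_total a 0 with h | h
    · rw [abs_of_nonpos h, max_eq_left (neg_nonneg.mpr h)]; ring
    · rw [abs_of_nonneg h, max_eq_right (neg_nonpos.mpr h)]; ring
  rw [← Finset.add_sum_erase _ _ (Finset.mem_univ i)]
  simp only [habs, Finset.sum_add_distrib, ← Finset.mul_sum]
  linarith

theorem generalizedLaplacian_posSemidef {W : Matrix n n ℝ} (hW : W.IsSymm)
    (hdom : ∀ i, 2 * ∑ j ∈ Finset.univ.erase i, max (-W i j) 0 ≤ W i i) :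
    (generalizedLaplacian W).PosSemidef := by
  refine (isHermitian_iff_isSymm.mpr hW.generalizedLaplacian).posSemidef_of_sum_norm_le_re_diag
    fun i => ?_
  have hoff : ∀ j ∈ Finset.univ.erase i, ‖generalizedLaplacian W i j‖ = |W i j| := fun j hj => by
    rw [generalizedLaplacian_apply_of_ne W (Finset.ne_of_mem_erase hj).symm, Real.norm_eq_abs,
      abs_neg]
  rw [Finset.sum_congr rfl hoff, generalizedLaplacian_apply_self, RCLike.re_to_real]
  exact sum_abs_erase_le_sum_of_two_mul_sum_max_neg_le (hdom i)

end Laplacian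

end Matrix

theorem balanced_laplacian_psd_general (N : ℕ)
    (W : Matrix (Fin N) (Fin N) ℝ) (hsym : W.IsSymm)
    (hdom : ∀ i, 2 * ∑ j ∈ Finset.univ.erase i, max (-W i j) 0 ≤ W i i)
    (Lb : Matrix (Fin N) (Fin N) ℝ)
    (hLb : Lb = Matrix.diagonal (fun k => ∑ l, W k l) - W
            + Matrix.diagonal (fun k => W k k)) :
    ∀ x : Fin N → ℝ, 0 ≤ x ⬝ᵥ Lb.mulVec x := by
  subst hLb
  exact (Matrix.generalizedLaplacian_posSemidef hsym hdom).dotProduct_mulVec_nonneg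

/-- If `W` is symmetric with `W i i ≥ 2 Σ_{j≠i} max(-W i j, 0)` for every `i`,
and the signed graph is balanced with some polarities `β` (`β i * β j * W i j ≥ 0`
for `i ≠ j`), then the balanced signed graph Laplacian `L^b = D - W + diag(W)`
is positive semi-definite. -/
theorem balanced_laplacian_psd (N : ℕ)
    (W : Matrix (Fin N) (Fin N) ℝ) (hsym : W.IsSymm)
    (hdom : ∀ i, 2 * ∑ j ∈ Finset.univ.erase i, max (-W i j) 0 ≤ W i i)
    (hbal : ∃ β : Fin N → ℝ, (∀ i, β i = 1 ∨ β i = -1) ∧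
      ∀ i j : Fin N, i ≠ j → 0 ≤ β i * β j * W i j)
    (Lb : Matrix (Fin N) (Fin N) ℝ)
    (hLb : Lb = Matrix.diagonal (fun k => ∑ l, W k l) - W
            + Matrix.diagonal (fun k => W k k)) :
    ∀ x : Fin N → ℝ, 0 ≤ x ⬝ᵥ Lb.mulVec x :=
  balanced_laplacian_psd_general N W hsym hdom Lb hLb
end
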